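/- arXiv:math/0308195 — 3 statements merged into one kernel-verified Lean document; each statement's English description precedes it below -/
import Mathlib

section
/- Let e be a natural number with e ≥ 3. There is no additive subgroup H of (ℤ/eℤ) × (ℤ/2ℤ) × (ℤ/2ℤ) such that the projection onto the first factor maps H onto ℤ/eℤ and, for every x = (x₁,x₂,x₃) ∈ H, the rational number val x₁ / e + val x₂ / 2 + val x₃ / 2 is an integer. -/
/-!
An element of `H` over the generator `1 : ZMod e` contributes `1 / e + k / 2` with `k ∈ ℕ`;
multiplying an integrality relation `1 / e + k / 2 = z` by `2 e` gives `e ∣ 2`, impossible for `e ≥ 3`.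
-/

theorem inv_add_half_ne_intCast {e : ℕ} (he : 2 < e) (k z : ℤ) : (e : ℚ)⁻¹ + k / 2 ≠ z := by
  intro h
  have he0 : (e : ℚ) ≠ 0 := by positivity
  have hq : (2 : ℚ) = e * (2 * z - k) := by
    field_simp at h
    linarith
  have hdvd : (e : ℤ) ∣ 2 := ⟨2 * z - k, by exact_mod_cast hq⟩
  have := Int.le_of_dvd two_pos hdvd
  omega

theorem case_two_impossible (e : ℕ) (he : 3 ≤ e) :
    ¬ ∃ H : AddSubgroup (ZMod e × ZMod 2 × ZMod 2),
        (∀ a : ZMod e, ∃ x ∈ H, x.1 = a) ∧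
        (∀ x ∈ H, ∃ z : ℤ,
          ((x.1.val : ℚ) / e + (x.2.1.val : ℚ) / 2 + (x.2.2.val : ℚ) / 2 = (z : ℚ))) := by
  rintro ⟨H, hsurj, hint⟩
  have : Fact (1 < e) := ⟨by omega⟩
  obtain ⟨x, hxH, hx1⟩ := hsurj 1
  obtain ⟨z, hz⟩ := hint x hxH
  apply inv_add_half_ne_intCast he (x.2.1.val + x.2.2.val) z
  rw [← hz, hx1, ZMod.val_one]
  push_cast
  ring
end

section
/- Let e₁, e₂ be natural numbers with e₁ ≥ 3 and e₂ ≥ 3, and let H be an additive subgroup of (ℤ/e₁ℤ) × (ℤ/e₂ℤ) such that the projection onto the first factor maps H onto ℤ/e₁ℤ, the projection onto the second factor maps H onto ℤ/e₂ℤ, and for every x = (x₁,x₂) ∈ H the rational number val x₁ / e₁ + val x₂ / e₂ is an integer. Then e₁ = e₂. -/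
theorem Nat.dvd_of_inv_add_div_eq_intCast {a b : ℕ} (ha : a ≠ 0) (hb : b ≠ 0) {v z : ℤ}
    (h : (a : ℚ)⁻¹ + v / b = z) : a ∣ b := by
  have hb_eq : (b : ℤ) = a * (z * b - v) := by
    qify
    field_simp at h
    linarith
  exact Int.natCast_dvd_natCast.mp ⟨_, hb_eq⟩

theorem ZMod.dvd_of_val_one_div_add_val_div_eq_intCast {a b : ℕ} (ha : 1 < a) (hb : b ≠ 0)
    (v : ZMod b) {z : ℤ} (h : ((1 : ZMod a).val : ℚ) / a + v.val / b = z) : a ∣ b := by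
  have : Fact (1 < a) := ⟨ha⟩
  rw [ZMod.val_one, Nat.cast_one, one_div] at h
  exact Nat.dvd_of_inv_add_div_eq_intCast (by omega) hb (v := v.val) (z := z)
    (by rwa [Int.cast_natCast])

theorem case_three_equal_indices (e₁ e₂ : ℕ) (he₁ : 3 ≤ e₁) (he₂ : 3 ≤ e₂)
    (H : AddSubgroup (ZMod e₁ × ZMod e₂))
    (hsurj₁ : ∀ a : ZMod e₁, ∃ x ∈ H, x.1 = a)
    (hsurj₂ : ∀ b : ZMod e₂, ∃ x ∈ H, x.2 = b)
    (hint : ∀ x ∈ H, ∃ z : ℤ,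
      ((x.1.val : ℚ) / e₁ + (x.2.val : ℚ) / e₂ = (z : ℚ))) :
    e₁ = e₂ := by
  obtain ⟨x, hxH, hx₁⟩ := hsurj₁ 1
  obtain ⟨z, hz⟩ := hint x hxH
  rw [hx₁] at hz
  obtain ⟨y, hyH, hy₂⟩ := hsurj₂ 1
  obtain ⟨w, hw⟩ := hint y hyH
  rw [hy₂, add_comm] at hw
  exact Nat.dvd_antisymm
    (ZMod.dvd_of_val_one_div_add_val_div_eq_intCast (by omega) (by omega) x.2 hz)
    (ZMod.dvd_of_val_one_div_add_val_div_eq_intCast (by omega) (by omega) y.1 hw)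
end

section
/- Let s be a natural number and e : Fin s → ℕ a function with e(i) ≥ 2 for every i, such that Σ_i ⌊3(e(i)−1)/e(i)⌋ = 4. Let H be a finite additive abelian group and φ : H → Π_i ℤ/e(i)ℤ an injective additive group homomorphism such that for each index i the composition of φ with the i-th coordinate projection maps H onto ℤ/e(i)ℤ, and such that for every nonzero χ ∈ H the rational number Σ_i val (φ(χ)(i)) / e(i) is an integer. Then exactly one of the following holds: (a) s = 4, e(i) = 2 for every i, and the cardinality of H is 2, 4, or 8; or (b) s = 2 and there is a natural number m ≥ 3 with e(i) = m for every i and H isomorphic as an additive group to ℤ/mℤ. -/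
private lemma floor_term (n : ℕ) (hn : 2 ≤ n) :
    ⌊(3 * ((n : ℚ) - 1)) / (n : ℚ)⌋ = if n = 2 then 1 else 2 := by
  have hn0 : (0:ℚ) < n := by exact_mod_cast Nat.lt_of_lt_of_le Nat.zero_lt_two hn
  split_ifs with h
  · subst h; norm_num
  · have h3 : (3:ℚ) ≤ n := by exact_mod_cast (by omega : 3 ≤ n)
    rw [Int.floor_eq_iff]
    constructor
    · rw [le_div_iff₀ hn0]; push_cast; linarith
    · rw [div_lt_iff₀ hn0]; push_cast; linarith

private lemma key2 (m : ℕ) (hm : 3 ≤ m) (a b : ℕ) (ha : a < 2) (hb : b < 2) (z : ℤ)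
    (h : (a:ℚ)/2 + (b:ℚ)/2 + 1/(m:ℚ) = (z:ℚ)) : False := by
  have hm' : (3:ℚ) ≤ (m:ℚ) := by exact_mod_cast hm
  have h1 : 0 < (1:ℚ)/m := by positivity
  have h2 : (1:ℚ)/m ≤ 1/3 := by
    rw [div_le_div_iff₀ (by linarith) (by norm_num)]; linarith
  interval_cases a <;> interval_cases b <;>
  · rcases le_or_gt z 0 with hz | hz
    · have : (z:ℚ) ≤ 0 := by exact_mod_cast hz
      push_cast at h; linarith
    · rcases le_or_gt z 1 with hz2 | hz2
      · have hz1 : z = 1 := by omega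
        subst hz1; push_cast at h; linarith
      · have : (2:ℚ) ≤ (z:ℚ) := by exact_mod_cast hz2
        push_cast at h; linarith

theorem cover_classification {H : Type*} [AddCommGroup H] [Finite H]
    (s : ℕ) (e : Fin s → ℕ) (he : ∀ i, 2 ≤ e i)
    (hsum : ∑ i : Fin s, ⌊(3 * ((e i : ℚ) - 1)) / (e i)⌋ = 4)
    (φ : H →+ ∀ i : Fin s, ZMod (e i)) (hinj : Function.Injective φ)
    (hsurj : ∀ i : Fin s, ∀ a : ZMod (e i), ∃ χ : H, φ χ i = a)
    (hint : ∀ χ : H, χ ≠ 0 → ∃ z : ℤ,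
      (∑ i : Fin s, ((φ χ i).val : ℚ) / (e i)) = (z : ℚ)) :
    ((s = 4 ∧ (∀ i, e i = 2) ∧
        (Nat.card H = 2 ∨ Nat.card H = 4 ∨ Nat.card H = 8)) ∧
      ¬ (s = 2 ∧ ∃ m : ℕ, 3 ≤ m ∧ (∀ i, e i = m) ∧ Nonempty (H ≃+ ZMod m))) ∨
    ((s = 2 ∧ ∃ m : ℕ, 3 ≤ m ∧ (∀ i, e i = m) ∧ Nonempty (H ≃+ ZMod m)) ∧
      ¬ (s = 4 ∧ (∀ i, e i = 2) ∧
        (Nat.card H = 2 ∨ Nat.card H = 4 ∨ Nat.card H = 8))) := by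
  have hNZ : ∀ i, NeZero (e i) := fun i => ⟨by have := he i; omega⟩
  have hterm : ∀ i, ⌊(3 * ((e i : ℚ) - 1)) / (e i : ℚ)⌋ = if e i = 2 then 1 else 2 :=
    fun i => floor_term (e i) (he i)
  have htlb : ∀ i, 1 ≤ ⌊(3 * ((e i : ℚ) - 1)) / (e i : ℚ)⌋ := by
    intro i; rw [hterm i]; split_ifs <;> omega
  have htub : ∀ i, ⌊(3 * ((e i : ℚ) - 1)) / (e i : ℚ)⌋ ≤ 2 := by
    intro i; rw [hterm i]; split_ifs <;> omega
  -- bounds on s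
  have hslb : 2 ≤ s := by
    by_contra hs
    have hle : (∑ i : Fin s, ⌊(3 * ((e i : ℚ) - 1)) / (e i : ℚ)⌋) ≤ s * 2 := by
      calc (∑ i : Fin s, ⌊(3 * ((e i : ℚ) - 1)) / (e i : ℚ)⌋)
          ≤ ∑ _i : Fin s, (2:ℤ) := Finset.sum_le_sum (fun i _ => htub i)
        _ = s * 2 := by simp [Finset.sum_const, mul_comm]
    rw [hsum] at hle
    have : s * 2 ≤ 1 * 2 := by omega
    omega
  have hsub : s ≤ 4 := by
    by_contra hs
    have hle : (s:ℤ) * 1 ≤ ∑ i : Fin s, ⌊(3 * ((e i : ℚ) - 1)) / (e i : ℚ)⌋ := by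
      calc (s:ℤ) * 1 = ∑ _i : Fin s, (1:ℤ) := by simp
        _ ≤ _ := Finset.sum_le_sum (fun i _ => htlb i)
    rw [hsum] at hle
    omega
  interval_cases s
  -- Case s = 2
  · have h2sum := hsum
    rw [Fin.sum_univ_two, hterm 0, hterm 1] at h2sum
    have he0 : ¬ e 0 = 2 := by intro h; rw [if_pos h] at h2sum; split_ifs at h2sum <;> omega
    have he1 : ¬ e 1 = 2 := by intro h; rw [if_pos h] at h2sum; split_ifs at h2sum <;> omega
    have hm0 : 3 ≤ e 0 := by have := he 0; omega
    have hm1 : 3 ≤ e 1 := by have := he 1; omega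
    haveI := hNZ 0; haveI := hNZ 1
    -- kernel of each coordinate is trivial
    have hker0 : ∀ χ : H, φ χ 0 = 0 → χ = 0 := by
      intro χ h0
      by_contra hne
      obtain ⟨z, hz⟩ := hint χ hne
      rw [Fin.sum_univ_two, h0, ZMod.val_zero] at hz
      rw [Nat.cast_zero, zero_div, zero_add] at hz
      have hvk : (φ χ 1).val < e 1 := ZMod.val_lt _
      have hpos : (0:ℚ) < (e 1 : ℚ) := by exact_mod_cast (by omega : 0 < e 1)
      have h1 : (0:ℚ) ≤ (z:ℚ) := by rw [← hz]; positivity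
      have h2 : (z:ℚ) < 1 := by rw [← hz, div_lt_one hpos]; exact_mod_cast hvk
      have hz0 : z = 0 := by
        have h1' : (0:ℤ) ≤ z := by exact_mod_cast h1
        have h2' : z < 1 := by exact_mod_cast h2
        omega
      rw [hz0, Int.cast_zero, div_eq_zero_iff] at hz
      rcases hz with hz | hz
      · have hv0 : (φ χ 1).val = 0 := by exact_mod_cast hz
        have hk1 : φ χ 1 = 0 := (ZMod.val_eq_zero _).mp hv0
        apply hne
        apply hinj
        rw [map_zero]
        funext i
        fin_cases i
        · simpa using h0
        · simpa using hk1
      · exact absurd hz (by positivity)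
    have hker1 : ∀ χ : H, φ χ 1 = 0 → χ = 0 := by
      intro χ h0
      by_contra hne
      obtain ⟨z, hz⟩ := hint χ hne
      rw [Fin.sum_univ_two, h0, ZMod.val_zero] at hz
      rw [Nat.cast_zero, zero_div, add_zero] at hz
      have hvk : (φ χ 0).val < e 0 := ZMod.val_lt _
      have hpos : (0:ℚ) < (e 0 : ℚ) := by exact_mod_cast (by omega : 0 < e 0)
      have h1 : (0:ℚ) ≤ (z:ℚ) := by rw [← hz]; positivity
      have h2 : (z:ℚ) < 1 := by rw [← hz, div_lt_one hpos]; exact_mod_cast hvk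
      have hz0 : z = 0 := by
        have h1' : (0:ℤ) ≤ z := by exact_mod_cast h1
        have h2' : z < 1 := by exact_mod_cast h2
        omega
      rw [hz0, Int.cast_zero, div_eq_zero_iff] at hz
      rcases hz with hz | hz
      · have hv0 : (φ χ 0).val = 0 := by exact_mod_cast hz
        have hk1 : φ χ 0 = 0 := (ZMod.val_eq_zero _).mp hv0
        apply hne
        apply hinj
        rw [map_zero]
        funext i
        fin_cases i
        · simpa using hk1
        · simpa using h0
      · exact absurd hz (by positivity)
    -- each coordinate map is an isomorphism
    have mkEquiv : ∀ j : Fin 2, (∀ χ : H, φ χ j = 0 → χ = 0) → Nonempty (H ≃+ ZMod (e j)) := by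
      intro j hker
      have hinj' : Function.Injective ((Pi.evalAddMonoidHom (fun i => ZMod (e i)) j).comp φ) := by
        rw [injective_iff_map_eq_zero]
        intro χ hχ
        exact hker χ hχ
      have hsurj' : Function.Surjective ((Pi.evalAddMonoidHom (fun i => ZMod (e i)) j).comp φ) := by
        intro a; obtain ⟨χ, hχ⟩ := hsurj j a; exact ⟨χ, hχ⟩
      exact ⟨AddEquiv.ofBijective _ ⟨hinj', hsurj'⟩⟩
    obtain ⟨E0⟩ := mkEquiv 0 hker0
    obtain ⟨E1⟩ := mkEquiv 1 hker1
    have hc0 : Nat.card H = e 0 := by rw [Nat.card_congr E0.toEquiv, Nat.card_zmod]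
    have hc1 : Nat.card H = e 1 := by rw [Nat.card_congr E1.toEquiv, Nat.card_zmod]
    refine Or.inr ⟨⟨rfl, e 0, hm0, ?_, ⟨E0⟩⟩, ?_⟩
    · intro i; fin_cases i
      · rfl
      · show e 1 = e 0
        omega
    · rintro ⟨h, -⟩; exact absurd h (by norm_num)
  -- Case s = 3 : impossible
  · exfalso
    rw [Fin.sum_univ_three, hterm 0, hterm 1, hterm 2] at hsum
    haveI := hNZ 0; haveI := hNZ 1; haveI := hNZ 2
    split_ifs at hsum with h0 h1 h2 h3 h4 h5 h6 <;> try omega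
    -- branch: e 0 = 2, e 1 = 2, e 2 ≠ 2
    · have hm : 3 ≤ e 2 := by have := he 2; omega
      haveI : Fact (1 < e 2) := ⟨by omega⟩
      obtain ⟨χ, hχ⟩ := hsurj 2 1
      have hne : χ ≠ 0 := by
        intro h; rw [h, map_zero] at hχ
        have := congrArg ZMod.val hχ
        rw [Pi.zero_apply, ZMod.val_zero, ZMod.val_one] at this; omega
      obtain ⟨z, hz⟩ := hint χ hne
      have c0 : ((e 0 : ℕ) : ℚ) = 2 := by rw [h0]; norm_num
      have c1 : ((e 1 : ℕ) : ℚ) = 2 := by rw [h1]; norm_num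
      rw [Fin.sum_univ_three, hχ, ZMod.val_one, c0, c1] at hz
      push_cast at hz
      exact key2 (e 2) hm (φ χ 0).val (φ χ 1).val
        (by have := ZMod.val_lt (φ χ 0); omega)
        (by have := ZMod.val_lt (φ χ 1); omega) z (by linarith)
    -- branch: e 0 = 2, e 1 ≠ 2, e 2 = 2
    · have hm : 3 ≤ e 1 := by have := he 1; omega
      haveI : Fact (1 < e 1) := ⟨by omega⟩
      obtain ⟨χ, hχ⟩ := hsurj 1 1
      have hne : χ ≠ 0 := by
        intro h; rw [h, map_zero] at hχ
        have := congrArg ZMod.val hχ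
        rw [Pi.zero_apply, ZMod.val_zero, ZMod.val_one] at this; omega
      obtain ⟨z, hz⟩ := hint χ hne
      have c0 : ((e 0 : ℕ) : ℚ) = 2 := by rw [h0]; norm_num
      have c2 : ((e 2 : ℕ) : ℚ) = 2 := by rw [h3]; norm_num
      rw [Fin.sum_univ_three, hχ, ZMod.val_one, c0, c2] at hz
      push_cast at hz
      exact key2 (e 1) hm (φ χ 0).val (φ χ 2).val
        (by have := ZMod.val_lt (φ χ 0); omega)
        (by have := ZMod.val_lt (φ χ 2); omega) z (by linarith)
    -- branch: e 0 ≠ 2, e 1 = 2, e 2 = 2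
    · have hm : 3 ≤ e 0 := by have := he 0; omega
      haveI : Fact (1 < e 0) := ⟨by omega⟩
      obtain ⟨χ, hχ⟩ := hsurj 0 1
      have hne : χ ≠ 0 := by
        intro h; rw [h, map_zero] at hχ
        have := congrArg ZMod.val hχ
        rw [Pi.zero_apply, ZMod.val_zero, ZMod.val_one] at this; omega
      obtain ⟨z, hz⟩ := hint χ hne
      have c1 : ((e 1 : ℕ) : ℚ) = 2 := by rw [h4]; norm_num
      have c2 : ((e 2 : ℕ) : ℚ) = 2 := by rw [h5]; norm_num
      rw [Fin.sum_univ_three, hχ, ZMod.val_one, c1, c2] at hz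
      push_cast at hz
      exact key2 (e 0) hm (φ χ 1).val (φ χ 2).val
        (by have := ZMod.val_lt (φ χ 1); omega)
        (by have := ZMod.val_lt (φ χ 2); omega) z (by linarith)
  -- Case s = 4
  · have hall : ∀ i : Fin 4, e i = 2 := by
      by_contra h
      push_neg at h
      obtain ⟨j, hj⟩ := h
      rw [← Finset.add_sum_erase _ _ (Finset.mem_univ j), hterm j, if_neg hj] at hsum
      have h3 : (3:ℤ) ≤ ∑ i ∈ Finset.univ.erase j, ⌊(3 * ((e i : ℚ) - 1)) / (e i : ℚ)⌋ := by
        have := Finset.card_nsmul_le_sum (Finset.univ.erase j)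
          (fun i => ⌊(3 * ((e i : ℚ) - 1)) / (e i : ℚ)⌋) 1 (fun i _ => htlb i)
        rwa [Finset.card_erase_of_mem (Finset.mem_univ j), Finset.card_univ,
          Fintype.card_fin, nsmul_eq_mul] at this
      omega
    haveI := hNZ 0
    haveI : Fact (1 < e 0) := ⟨by rw [hall 0]; omega⟩
    -- Nat.card H divides 16
    have hdvd : Nat.card H ∣ 16 := by
      have h1 := AddSubgroup.card_dvd_of_injective φ hinj
      have h2 : Nat.card (∀ i : Fin 4, ZMod (e i)) = 16 := by
        rw [Nat.card_pi]
        simp only [Nat.card_zmod, hall]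
        norm_num [Fin.prod_univ_four]
      rwa [h2] at h1
    -- H is nontrivial
    have hnt : 1 < Nat.card H := by
      rw [Finite.one_lt_card_iff_nontrivial]
      obtain ⟨χ, hχ⟩ := hsurj 0 1
      refine ⟨χ, 0, ?_⟩
      intro h
      rw [h, map_zero] at hχ
      have := congrArg ZMod.val hχ
      rw [Pi.zero_apply, ZMod.val_zero, ZMod.val_one] at this
      omega
    -- Nat.card H ≠ 16
    have hne16 : Nat.card H ≠ 16 := by
      intro h16
      have hbij : Function.Bijective φ := by
        rw [Nat.bijective_iff_injective_and_card]
        refine ⟨hinj, ?_⟩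
        rw [h16, Nat.card_pi]
        simp only [Nat.card_zmod, hall]
        norm_num [Fin.prod_univ_four]
      obtain ⟨χ, hχ⟩ := hbij.2 (fun i => if i = 0 then 1 else 0)
      have hχ0 : φ χ 0 = 1 := by rw [hχ]; exact if_pos rfl
      have hχ1 : φ χ 1 = 0 := by rw [hχ]; exact if_neg (by decide)
      have hχ2 : φ χ 2 = 0 := by rw [hχ]; exact if_neg (by decide)
      have hχ3 : φ χ 3 = 0 := by rw [hχ]; exact if_neg (by decide)
      have hne : χ ≠ 0 := by
        intro h; rw [h, map_zero] at hχ0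
        have := congrArg ZMod.val hχ0
        rw [Pi.zero_apply, ZMod.val_zero, ZMod.val_one] at this
        omega
      obtain ⟨z, hz⟩ := hint χ hne
      rw [Fin.sum_univ_four, hχ0, hχ1, hχ2, hχ3, ZMod.val_one,
        ZMod.val_zero, ZMod.val_zero, ZMod.val_zero, hall 0] at hz
      push_cast at hz
      norm_num at hz
      have h2z : (2:ℚ) * z = 1 := by linarith
      have : (2:ℤ) * z = 1 := by exact_mod_cast h2z
      omega
    refine Or.inl ⟨⟨rfl, hall, ?_⟩, ?_⟩
    · have hle : Nat.card H ≤ 16 := Nat.le_of_dvd (by norm_num) hdvd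
      have hle' : Nat.card H ≤ 15 := by omega
      interval_cases h : Nat.card H <;> revert hdvd <;> decide
    · rintro ⟨h, -⟩; exact absurd h (by norm_num)
end
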